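/- arXiv:1812.11236 — 4 statements merged into one kernel-verified Lean document; each statement's English description precedes it below -/
import Mathlib

section
/- The system z_1 − z_1^{-1} z_2 = (χ/τ)(2ξ_1 − ξ_2), z_{i-1}^{-1} z_i − z_i^{-1} z_{i+1} = (χ/τ)(−ξ_{i-1} + 2ξ_i − ξ_{i+1}) for 2 ≤ i ≤ n−1, and z_{n-1}^{-1} z_n − z_n^{-1} = (χ/τ)(−ξ_{n-1} + 2ξ_n), together with χ = z_1 + z_1^{-1}z_2 + ⋯ + z_{n-1}^{-1}z_n + z_n^{-1}, has the solution z_1 = (χ/τ)(τ/(n+1) + ξ_1), z_{i+1} = (χ/τ)^{i+1} ∏_{j=0}^{i} (τ/(n+1) − ξ_j + ξ_{j+1}), where ξ_0 = 0. -/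
/-- The critical-point system for the Legendre transform of
`τ ln χ_{ω_1}` for `sl_{n+1}` (with `ξ_0 = ξ_{n+1} = 0`, positive unknowns `z_i`, `χ`
given by the character sum) has the solution `z_1 = (χ/τ)(τ/(n+1)+ξ_1)`,
`z_{i+1} = (χ/τ)^{i+1} ∏_{j=0}^{i} (τ/(n+1) − ξ_j + ξ_{j+1})`. -/
theorem stmt_7 (n : ℕ) (hn : 2 ≤ n) (τ χ : ℝ) (hτ : 0 < τ) (hχ : 0 < χ)
    (ξ z : ℕ → ℝ) (hξ0 : ξ 0 = 0) (hξtop : ξ (n+1) = 0)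
    (hσ : ∀ i ∈ Finset.Icc 1 (n+1), 0 < τ / (n+1) - ξ (i-1) + ξ i)
    (hz : ∀ i ∈ Finset.Icc 1 n, 0 < z i)
    (eq1 : z 1 - (z 1)⁻¹ * z 2 = χ / τ * (2 * ξ 1 - ξ 2))
    (eqmid : ∀ i, 2 ≤ i → i ≤ n - 1 →
      (z (i-1))⁻¹ * z i - (z i)⁻¹ * z (i+1) = χ / τ * (-ξ (i-1) + 2 * ξ i - ξ (i+1)))
    (eqlast : (z (n-1))⁻¹ * z n - (z n)⁻¹ = χ / τ * (-ξ (n-1) + 2 * ξ n))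
    (eqchi : χ = z 1 + (∑ i ∈ Finset.Icc 1 (n-1), (z i)⁻¹ * z (i+1)) + (z n)⁻¹) :
    z 1 = χ / τ * (τ / (n+1) + ξ 1) ∧
    ∀ i, 1 ≤ i → i ≤ n - 1 →
      z (i+1) = (χ / τ) ^ (i+1) *
        ∏ j ∈ Finset.range (i+1), (τ / (n+1) - ξ j + ξ (j+1)) := by
  obtain ⟨m, rfl⟩ : ∃ m, n = m + 2 := ⟨n - 2, by omega⟩
  have hτ' : τ ≠ 0 := ne_of_gt hτ
  set c : ℝ := χ / τ with hc
  -- ratio variables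
  set r : ℕ → ℝ := fun i => if i = 1 then z 1 else if i ≤ m + 2 then (z (i-1))⁻¹ * z i
    else (z (m+2))⁻¹ with hrdef
  have hr1 : r 1 = z 1 := by simp [hrdef]
  have hrmid : ∀ i, 2 ≤ i → i ≤ m + 2 → r i = (z (i-1))⁻¹ * z i := by
    intro i h1 h2
    simp only [hrdef]
    rw [if_neg (by omega), if_pos h2]
  have hrtop : r (m+3) = (z (m+2))⁻¹ := by
    simp only [hrdef]
    rw [if_neg (by omega), if_neg (by omega)]
  have hzne : ∀ i, 1 ≤ i → i ≤ m + 2 → z i ≠ 0 := by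
    intro i h1 h2
    exact ne_of_gt (hz i (Finset.mem_Icc.mpr ⟨h1, h2⟩))
  -- the step equations in terms of r
  have hstep : ∀ i, 1 ≤ i → i ≤ m + 2 →
      r i - r (i+1) = c * (-ξ (i-1) + 2 * ξ i - ξ (i+1)) := by
    intro i h1 h2
    rcases eq_or_ne i 1 with rfl | hne1
    · rw [hr1, hrmid 2 (by omega) (by omega)]
      show z 1 - (z 1)⁻¹ * z 2 = _
      rw [hξ0, eq1]; ring
    rcases eq_or_ne i (m+2) with rfl | hne2
    · rw [hrmid (m+2) (by omega) (by omega), hrtop]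
      have : (m:ℕ) + 2 + 1 = m + 3 := rfl
      rw [show ξ (m+2+1) = 0 from hξtop]
      have h := eqlast
      rw [show (m:ℕ)+2-1 = m+1 from rfl] at h ⊢
      rw [h]; ring
    · have h2' : 2 ≤ i := by omega
      have h3 : i ≤ m + 1 := by omega
      rw [hrmid i h2' h2, hrmid (i+1) (by omega) (by omega)]
      have h := eqmid i h2' (by omega)
      rw [show i + 1 - 1 = i from rfl] at *
      exact h
  -- telescoping
  have htel : ∀ i, 1 ≤ i → i ≤ m + 3 → r i = r 1 - c * (ξ 1 + ξ (i-1) - ξ i) := by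
    intro i
    induction i with
    | zero => omega
    | succ k ih =>
      intro _ hk
      rcases Nat.eq_zero_or_pos k with rfl | h1
      · rw [hξ0]; ring
      · have hkn : k ≤ m + 2 := by omega
        have hs := hstep k h1 hkn
        have hi := ih h1 (by omega)
        rw [show k + 1 - 1 = k from rfl]
        linear_combination hi - hs
  -- χ as the sum of the r's
  have hchi : χ = ∑ i ∈ Finset.range (m+3), r (i+1) := by
    rw [Finset.sum_range_succ', Finset.sum_range_succ]
    rw [hr1, hrtop]
    rw [eqchi, show (m:ℕ) + 2 - 1 = m + 1 from rfl, ← Finset.Ico_add_one_right_eq_Icc,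
      Finset.sum_Ico_eq_sum_range, show (m:ℕ) + 1 + 1 - 1 = m + 1 from rfl]
    have : ∀ j ∈ Finset.range (m+1), r (j + 1 + 1) = (z (1+j))⁻¹ * z (1+j+1) := by
      intro j hj
      rw [Finset.mem_range] at hj
      rw [hrmid (j+2) (by omega) (by omega)]
      rw [show j + 2 - 1 = 1 + j by omega, show j + 2 = 1 + j + 1 by omega]
    rw [Finset.sum_congr rfl this]
    ring
  -- evaluate the sum via telescoping
  have hsum : χ = (m + 3 : ℝ) * (r 1 - c * ξ 1) := by
    rw [hchi]
    have : ∀ i ∈ Finset.range (m+3),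
        r (i+1) = (r 1 - c * ξ 1) - c * (ξ i - ξ (i+1)) := by
      intro i hi
      rw [Finset.mem_range] at hi
      rw [htel (i+1) (by omega) (by omega), show i + 1 - 1 = i from rfl]
      ring
    rw [Finset.sum_congr rfl this, Finset.sum_sub_distrib, ← Finset.mul_sum,
      Finset.sum_range_sub' ξ, Finset.sum_const, hξ0,
      show ξ (m+3) = ξ (m+2+1) from rfl, hξtop, Finset.card_range]
    push_cast
    ring
  have hm3 : ((m:ℝ) + 3) ≠ 0 := by positivity
  have hr1val : r 1 = c * (τ / ((m:ℝ) + 3) + ξ 1) := by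
    have h1 : r 1 - c * ξ 1 = χ / ((m:ℝ) + 3) := by
      rw [eq_div_iff hm3]; linear_combination -hsum
    have h2 : c * (τ / ((m:ℝ) + 3) + ξ 1) = χ / ((m:ℝ) + 3) + c * ξ 1 := by
      rw [hc]; field_simp
    linarith
  have hrval : ∀ i, 1 ≤ i → i ≤ m + 3 →
      r i = c * (τ / ((m:ℝ) + 3) - ξ (i-1) + ξ i) := by
    intro i h1 h2
    rw [htel i h1 h2, hr1val]; ring
  -- product formula
  have hzval : ∀ i, 1 ≤ i → i ≤ m + 2 →
      z i = c ^ i * ∏ j ∈ Finset.range i, (τ / ((m:ℝ) + 3) - ξ j + ξ (j+1)) := by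
    intro i
    induction i with
    | zero => omega
    | succ k ih =>
      intro _ hk
      rcases Nat.eq_zero_or_pos k with rfl | h1
      · rw [← hr1, hrval 1 le_rfl (by omega), Finset.prod_range_one, hξ0]
        simp
      · have hkk : k ≤ m + 1 := by omega
        have hik := ih h1 (by omega)
        have hzk := hzne k h1 (by omega)
        have hrk : r (k+1) = (z k)⁻¹ * z (k+1) := by
          rw [hrmid (k+1) (by omega) (by omega), show k + 1 - 1 = k from rfl]
        have hzstep : z (k+1) = z k * r (k+1) := by
          rw [hrk]
          field_simp
        rw [hzstep, hrval (k+1) (by omega) (by omega),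
          show k + 1 - 1 = k from rfl, hik, Finset.prod_range_succ, pow_succ]
        ring
  have hcast : ((m+2:ℕ):ℝ) + 1 = (m:ℝ) + 3 := by push_cast; ring
  constructor
  · rw [← hr1, hr1val, hcast]
  · intro i h1 h2
    have h2' : i ≤ m + 1 := by omega
    rw [hcast, hzval (i+1) (by omega) (by omega)]
end

section
/- With σ_i = τ/(n+1) − ξ_{i-1} + ξ_i (ξ_0 = ξ_{n+1} = 0, all σ_i > 0), the value χ determined by the sl_{n+1} critical point equations satisfies χ^{n+1} = τ^{n+1} / ∏_{i=1}^{n+1} σ_i. -/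
/-!
Put `w 0 = w (n + 1) = 1` and `w i = z i` for `1 ≤ i ≤ n`, and `t j = w (j + 1) / w j`.
The critical point equations say exactly that
`t j - t (j + 1) = (χ / τ) (σ (j + 1) - σ (j + 2))`, so `t j - (χ / τ) σ (j + 1)` is constant
in `j`; since `∑ t j = χ` (the last equation) and `∑ σ i = τ` (the `ξ` telescope away), the
constant is `0`. Hence `t j = (χ / τ) σ (j + 1)`, and the telescoping product
`∏ t j = w (n + 1) / w 0 = 1` gives `(χ / τ) ^ (n + 1) ∏ σ i = 1`.
-/

open Finset

@[to_additive sum_Icc_one_eq_sum_range]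
theorem prod_Icc_one_eq_prod_range {M : Type*} [CommMonoid M] (f : ℕ → M) (n : ℕ) :
    ∏ i ∈ Icc 1 n, f i = ∏ i ∈ range n, f (i + 1) := by
  rw [range_eq_Ico, prod_Ico_add' f 0 n 1, zero_add, Ico_add_one_right_eq_Icc]

theorem prod_range_div_of_ne_zero {G₀ : Type*} [CommGroupWithZero G₀] (f : ℕ → G₀)
    (hf : ∀ i, f i ≠ 0) (n : ℕ) : ∏ i ∈ range n, f (i + 1) / f i = f n / f 0 := by
  induction n with
  | zero => simp [hf 0]
  | succ n ih => rw [prod_range_succ, ih, mul_comm, div_mul_div_cancel₀ (hf n)]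

theorem eq_mul_of_forall_sub_succ_eq {K : Type*} [Field K] [CharZero K] (t s : ℕ → K) (k : K)
    (N : ℕ) (hstep : ∀ j, j + 1 < N → t j - t (j + 1) = k * (s j - s (j + 1)))
    (hsum : ∑ j ∈ range N, t j = k * ∑ j ∈ range N, s j) :
    ∀ j < N, t j = k * s j := by
  set c := t 0 - k * s 0
  have hconst : ∀ j < N, t j - k * s j = c := by
    intro j hj
    induction j with
    | zero => rfl
    | succ j ih =>
      have := hstep j hj
      linear_combination ih (by omega) - this
  have hc : (N : K) * c = 0 := by
    have := sum_congr rfl fun j hj => hconst j (mem_range.mp hj)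
    rw [sum_sub_distrib, ← mul_sum, hsum, sub_self, sum_const, card_range, nsmul_eq_mul] at this
    exact this.symm
  intro j hj
  have := hconst j hj
  rw [(mul_eq_zero.mp hc).resolve_left (by exact_mod_cast hj.ne_bot)] at this
  linear_combination this

def padWithOne (n : ℕ) (z : ℕ → ℝ) (i : ℕ) : ℝ := if i ∈ Icc 1 n then z i else 1

section padWithOne

variable {n : ℕ} {z : ℕ → ℝ}

theorem padWithOne_of_mem {i : ℕ} (hi : i ∈ Icc 1 n) : padWithOne n z i = z i := if_pos hi

@[simp] theorem padWithOne_zero : padWithOne n z 0 = 1 := by simp [padWithOne]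

@[simp] theorem padWithOne_succ_top : padWithOne n z (n + 1) = 1 := by simp [padWithOne]

theorem padWithOne_ne_zero (hz : ∀ i ∈ Icc 1 n, z i ≠ 0) (i : ℕ) :
    padWithOne n z i ≠ 0 := by
  unfold padWithOne
  split_ifs with hi
  exacts [hz i hi, one_ne_zero]

end padWithOne

theorem sum_range_eq_of_eq_div_sub_add {τ : ℝ} {ξ σ : ℕ → ℝ} {N : ℕ}
    (hσ : ∀ i, σ i = τ / (N + 1) - ξ (i - 1) + ξ i) :
    ∑ j ∈ range (N + 1), σ (j + 1) = τ + ξ (N + 1) - ξ 0 := by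
  simp_rw [hσ, Nat.add_sub_cancel, sub_add_eq_add_sub, add_sub_assoc, sum_add_distrib,
    sum_range_sub, sum_const, card_range, nsmul_eq_mul]
  push_cast
  field_simp

theorem sum_range_padWithOne_div {n : ℕ} (hn : 2 ≤ n) {χ : ℝ} {z : ℕ → ℝ}
    (eqchi : χ = z 1 + (∑ i ∈ Icc 1 (n-1), (z i)⁻¹ * z (i+1)) + (z n)⁻¹) :
    ∑ j ∈ range (n + 1), padWithOne n z (j + 1) / padWithOne n z j = χ := by
  obtain ⟨m, rfl⟩ : ∃ m, n = m + 2 := ⟨n - 2, by omega⟩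
  have hmid : ∀ j ∈ range (m + 1),
      padWithOne (m + 2) z (j + 1 + 1) / padWithOne (m + 2) z (j + 1)
        = (z (j + 1))⁻¹ * z (j + 1 + 1) := fun j hj => by
    rw [mem_range] at hj
    rw [padWithOne_of_mem (by simp; omega), padWithOne_of_mem (by simp; omega), div_eq_inv_mul]
  rw [sum_range_succ, sum_range_succ', eqchi, show m + 2 - 1 = m + 1 from rfl,
    sum_Icc_one_eq_sum_range, sum_congr rfl hmid, zero_add, padWithOne_zero,
    padWithOne_succ_top, padWithOne_of_mem (i := 1) (by simp),
    padWithOne_of_mem (i := m + 2) (by simp)]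
  ring

theorem padWithOne_div_sub_succ_div {n : ℕ} (hn : 2 ≤ n) {τ χ : ℝ} {ξ z σ : ℕ → ℝ}
    (hξ0 : ξ 0 = 0) (hξtop : ξ (n+1) = 0)
    (hσdef : ∀ i, σ i = τ / (n+1) - ξ (i-1) + ξ i)
    (eq1 : z 1 - (z 1)⁻¹ * z 2 = χ / τ * (2 * ξ 1 - ξ 2))
    (eqmid : ∀ i, 2 ≤ i → i ≤ n - 1 →
      (z (i-1))⁻¹ * z i - (z i)⁻¹ * z (i+1) = χ / τ * (-ξ (i-1) + 2 * ξ i - ξ (i+1)))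
    (eqlast : (z (n-1))⁻¹ * z n - (z n)⁻¹ = χ / τ * (-ξ (n-1) + 2 * ξ n))
    (j : ℕ) (hj : j + 1 < n + 1) :
    padWithOne n z (j + 1) / padWithOne n z j - padWithOne n z (j + 1 + 1) / padWithOne n z (j + 1)
      = χ / τ * (σ (j + 1) - σ (j + 1 + 1)) := by
  obtain ⟨m, rfl⟩ : ∃ m, n = m + 2 := ⟨n - 2, by omega⟩
  have hσstep : σ (j + 1) - σ (j + 1 + 1) = -ξ j + 2 * ξ (j + 1) - ξ (j + 1 + 1) := by
    rw [hσdef, hσdef]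
    simp only [Nat.add_sub_cancel]
    ring
  rw [hσstep]
  rcases Nat.eq_zero_or_pos j with rfl | hj0
  · rw [padWithOne_zero, padWithOne_of_mem (by simp), padWithOne_of_mem (by simp), hξ0]
    linear_combination eq1
  rcases Nat.lt_or_ge j (m + 1) with hjm | hjm
  · have := eqmid (j + 1) (by omega) (by omega)
    simp only [Nat.add_sub_cancel] at this
    rw [padWithOne_of_mem (i := j) (by simp; omega),
      padWithOne_of_mem (i := j + 1) (by simp; omega),
      padWithOne_of_mem (i := j + 1 + 1) (by simp; omega), div_eq_inv_mul, div_eq_inv_mul]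
    exact this
  · obtain rfl : j = m + 1 := by omega
    rw [padWithOne_succ_top, padWithOne_of_mem (i := m + 1) (by simp),
      padWithOne_of_mem (i := m + 1 + 1) (by simp), hξtop]
    rw [show m + 2 - 1 = m + 1 from rfl] at eqlast
    linear_combination eqlast

theorem stmt_8_general (n : ℕ) (hn : 2 ≤ n) (τ χ : ℝ) (hτ : 0 < τ)
    (ξ z σ : ℕ → ℝ) (hξ0 : ξ 0 = 0) (hξtop : ξ (n+1) = 0)
    (hσdef : ∀ i, σ i = τ / (n+1) - ξ (i-1) + ξ i)
    (hz : ∀ i ∈ Finset.Icc 1 n, 0 < z i)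
    (eq1 : z 1 - (z 1)⁻¹ * z 2 = χ / τ * (2 * ξ 1 - ξ 2))
    (eqmid : ∀ i, 2 ≤ i → i ≤ n - 1 →
      (z (i-1))⁻¹ * z i - (z i)⁻¹ * z (i+1) = χ / τ * (-ξ (i-1) + 2 * ξ i - ξ (i+1)))
    (eqlast : (z (n-1))⁻¹ * z n - (z n)⁻¹ = χ / τ * (-ξ (n-1) + 2 * ξ n))
    (eqchi : χ = z 1 + (∑ i ∈ Finset.Icc 1 (n-1), (z i)⁻¹ * z (i+1)) + (z n)⁻¹) :
    χ ^ (n+1) = τ ^ (n+1) / ∏ i ∈ Finset.Icc 1 (n+1), σ i := by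
  set w := padWithOne n z
  have hratio : ∀ j < n + 1, w (j + 1) / w j = χ / τ * σ (j + 1) := by
    refine eq_mul_of_forall_sub_succ_eq _ _ _ _
      (padWithOne_div_sub_succ_div hn hξ0 hξtop hσdef eq1 eqmid eqlast) ?_
    rw [sum_range_padWithOne_div hn eqchi, sum_range_eq_of_eq_div_sub_add hσdef, hξ0, hξtop]
    field_simp
    ring
  have hprod : (χ / τ) ^ (n + 1) * ∏ i ∈ Icc 1 (n + 1), σ i = 1 :=
    calc (χ / τ) ^ (n + 1) * ∏ i ∈ Icc 1 (n + 1), σ i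
        = ∏ j ∈ range (n + 1), w (j + 1) / w j := by
          rw [prod_congr rfl fun j hj => hratio j (mem_range.mp hj), prod_mul_distrib,
            prod_const, card_range, prod_Icc_one_eq_prod_range]
      _ = 1 := by
          simp [w, prod_range_div_of_ne_zero w (padWithOne_ne_zero fun i hi => (hz i hi).ne')]
  rw [eq_div_iff (right_ne_zero_of_mul_eq_one hprod)]
  rw [div_pow] at hprod
  field_simp at hprod
  exact hprod

/-- With `σ_i = τ/(n+1) − ξ_{i-1} + ξ_i` (`ξ_0 = ξ_{n+1} = 0`, all
`σ_i > 0`), the value `χ` determined by the `sl_{n+1}` critical point equations satisfies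
`χ^{n+1} = τ^{n+1} / ∏_{i=1}^{n+1} σ_i`. -/
theorem stmt_8 (n : ℕ) (hn : 2 ≤ n) (τ χ : ℝ) (hτ : 0 < τ) (hχ : 0 < χ)
    (ξ z σ : ℕ → ℝ) (hξ0 : ξ 0 = 0) (hξtop : ξ (n+1) = 0)
    (hσdef : ∀ i, σ i = τ / (n+1) - ξ (i-1) + ξ i)
    (hσ : ∀ i ∈ Finset.Icc 1 (n+1), 0 < σ i)
    (hz : ∀ i ∈ Finset.Icc 1 n, 0 < z i)
    (eq1 : z 1 - (z 1)⁻¹ * z 2 = χ / τ * (2 * ξ 1 - ξ 2))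
    (eqmid : ∀ i, 2 ≤ i → i ≤ n - 1 →
      (z (i-1))⁻¹ * z i - (z i)⁻¹ * z (i+1) = χ / τ * (-ξ (i-1) + 2 * ξ i - ξ (i+1)))
    (eqlast : (z (n-1))⁻¹ * z n - (z n)⁻¹ = χ / τ * (-ξ (n-1) + 2 * ξ n))
    (eqchi : χ = z 1 + (∑ i ∈ Finset.Icc 1 (n-1), (z i)⁻¹ * z (i+1)) + (z n)⁻¹) :
    χ ^ (n+1) = τ ^ (n+1) / ∏ i ∈ Finset.Icc 1 (n+1), σ i :=
  stmt_8_general n hn τ χ hτ ξ z σ hξ0 hξtop hσdef hz eq1 eqmid eqlast eqchi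
end

section
/- The Legendre transform S(τ,ξ) = min_x (τ ln χ_{ω_1}(e^x) − ⟨x, ξ⟩) for the vector representation of sl_{n+1} equals the entropy expression S(τ,σ) = τ ln τ − ∑_{i=1}^{n+1} σ_i ln σ_i, where σ_i = τ/(n+1) − ξ_{i-1} + ξ_i (with ξ_0 = ξ_{n+1} = 0). -/
/-!
In the coordinates `y i = x i - x (i-1)` (with `x 0 = x (n+1) = 0`) the character becomes
`∑ᵢ exp (y i)` and, after summation by parts, the Cartan pairing `⟨x, ξ⟩` becomes
`∑ᵢ σ i * y i`. The claim is then the Gibbs inequality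
`τ log τ - ∑ σ log σ ≤ τ log ∑ exp y - ∑ σ y` for `∑ σ = τ`, which follows
termwise from `1 - 1/t ≤ log t`, with equality at `y i = log (σ i) - c`;
the constant `c` is chosen so that `∑ y = 0`, i.e. `x (n+1) = 0`.
-/

open Finset Real

section Gibbs

variable {ι : Type*} {s : Finset ι} {σ : ι → ℝ} {τ : ℝ}

lemma sub_le_mul_log_div {a b : ℝ} (ha : 0 < a) (hb : 0 < b) : a - b ≤ a * log (a / b) := by
  have h := one_sub_inv_le_log_of_pos (div_pos ha hb)
  rw [inv_div] at h
  calc a - b = a * (1 - b / a) := by field_simp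
    _ ≤ a * log (a / b) := mul_le_mul_of_nonneg_left h ha.le

lemma mul_log_sub_sum_mul_log_le (hσ : ∀ i ∈ s, 0 < σ i) (hsum : ∑ i ∈ s, σ i = τ)
    (y : ι → ℝ) :
    τ * log τ - ∑ i ∈ s, σ i * log (σ i) ≤
      τ * log (∑ i ∈ s, exp (y i)) - ∑ i ∈ s, σ i * y i := by
  rcases s.eq_empty_or_nonempty with rfl | hs
  · simp [← hsum]
  have hτ : 0 < τ := hsum ▸ sum_pos hσ hs
  set S := ∑ i ∈ s, exp (y i)
  have hS : 0 < S := sum_pos (fun i _ => exp_pos (y i)) hs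
  -- compare `σ` with the Gibbs weights `w i = τ exp (y i) / S`, which also sum to `τ`
  have hw : ∑ i ∈ s, τ * exp (y i) / S = τ := by
    rw [← sum_div, ← mul_sum, mul_div_cancel_right₀ τ hS.ne']
  have hlog : ∀ i ∈ s,
      log (σ i / (τ * exp (y i) / S)) = log (σ i) - log τ - y i + log S := by
    intro i hi
    rw [log_div (hσ i hi).ne' (by positivity), log_div (by positivity) hS.ne',
      log_mul hτ.ne' (exp_ne_zero _), log_exp]
    ring
  have key : 0 ≤ ∑ i ∈ s, σ i * (log (σ i) - log τ - y i + log S) := by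
    calc (0 : ℝ) = ∑ i ∈ s, (σ i - τ * exp (y i) / S) := by
          rw [sum_sub_distrib, hsum, hw, sub_self]
      _ ≤ ∑ i ∈ s, σ i * log (σ i / (τ * exp (y i) / S)) :=
        sum_le_sum fun i hi => sub_le_mul_log_div (hσ i hi) (by positivity)
      _ = _ := sum_congr rfl fun i hi => by rw [hlog i hi]
  simp only [mul_add, mul_sub, sum_add_distrib, sum_sub_distrib, ← sum_mul, hsum] at key
  linarith

lemma mul_log_sub_sum_mul_log_eq (hσ : ∀ i ∈ s, 0 < σ i) (hsum : ∑ i ∈ s, σ i = τ)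
    {y : ι → ℝ} (c : ℝ) (hy : ∀ i ∈ s, y i = log (σ i) - c) :
    τ * log (∑ i ∈ s, exp (y i)) - ∑ i ∈ s, σ i * y i =
      τ * log τ - ∑ i ∈ s, σ i * log (σ i) := by
  rcases s.eq_empty_or_nonempty with rfl | hs
  · simp [← hsum]
  have hτ : 0 < τ := hsum ▸ sum_pos hσ hs
  have hexp : ∑ i ∈ s, exp (y i) = τ * exp (-c) := by
    rw [← hsum, sum_mul]
    exact sum_congr rfl fun i hi => by rw [hy i hi, sub_eq_add_neg, exp_add, exp_log (hσ i hi)]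
  rw [hexp, log_mul hτ.ne' (exp_ne_zero _), log_exp, sum_congr rfl fun i hi => by rw [hy i hi]]
  simp only [mul_sub, sum_sub_distrib, ← sum_mul, hsum]
  ring

end Gibbs

section Telescoping

variable {R : Type*} [CommRing R]

lemma sum_Icc_sub_pred (f : ℕ → R) (m : ℕ) :
    ∑ i ∈ Icc 1 m, (f i - f (i - 1)) = f m - f 0 := by
  induction m with
  | zero => simp
  | succ m ih => rw [sum_Icc_succ_top (by omega), ih, Nat.add_sub_cancel]; ring

lemma sum_Icc_mul_sub_pred (σ X : ℕ → R) (hX0 : X 0 = 0) (m : ℕ) :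
    ∑ i ∈ Icc 1 (m + 1), σ i * (X i - X (i - 1)) =
      ∑ a ∈ Icc 1 m, X a * (σ a - σ (a + 1)) + σ (m + 1) * X (m + 1) := by
  induction m with
  | zero => simp [hX0]
  | succ m ih =>
    rw [sum_Icc_succ_top (by omega), ih, sum_Icc_succ_top (by omega), Nat.add_sub_cancel]
    ring

lemma exists_sub_pred_eq_of_sum_eq_zero (y : ℕ → R) (m : ℕ)
    (hy : ∑ i ∈ Icc 1 m, y i = 0) :
    ∃ X : ℕ → R, X 0 = 0 ∧ X m = 0 ∧ ∀ i ∈ Icc 1 m, X i - X (i - 1) = y i := by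
  refine ⟨fun a => ∑ i ∈ Icc 1 a, y i, by simp, hy, fun i hi => ?_⟩
  obtain ⟨j, rfl⟩ : ∃ j, i = j + 1 := ⟨i - 1, by grind⟩
  dsimp only
  rw [sum_Icc_succ_top (by omega), Nat.add_sub_cancel]
  ring

end Telescoping

lemma sum_Icc_one_succ_eq {M : Type*} [AddCommMonoid M] {n : ℕ} (hn : 1 ≤ n) (f : ℕ → M) :
    ∑ i ∈ Icc 1 (n + 1), f i = f 1 + ∑ i ∈ Icc 2 n, f i + f (n + 1) := by
  rw [sum_Icc_succ_top (by omega), ← insert_Icc_add_one_left_eq_Icc hn, sum_insert (by simp)]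
  rfl

lemma exp_add_sum_exp_add_exp_eq_sum_exp_sub {n : ℕ} (hn : 1 ≤ n) {x X : ℕ → ℝ}
    (hX0 : X 0 = 0) (hXtop : X (n + 1) = 0) (hxX : ∀ i ∈ Icc 1 n, x i = X i) :
    exp (x 1) + ∑ i ∈ Icc 2 n, exp (-x (i - 1) + x i) + exp (-x n) =
      ∑ i ∈ Icc 1 (n + 1), exp (X i - X (i - 1)) := by
  have hmid : ∀ i ∈ Icc 2 n, exp (-x (i - 1) + x i) = exp (X i - X (i - 1)) := by
    intro i hi
    simp only [mem_Icc] at hi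
    rw [hxX i (by simp; omega), hxX (i - 1) (by simp; omega), neg_add_eq_sub]
  rw [sum_Icc_one_succ_eq hn, sum_congr rfl hmid, hxX 1 (by simp; omega),
    hxX n (by simp; omega), Nat.add_sub_cancel, hX0, hXtop, sub_zero, zero_sub]

section Cartan

variable {n : ℕ} {ξ : ℕ → ℝ} {C : ℕ → ℕ → ℝ}

lemma sum_cartan_mul_eq (hξ0 : ξ 0 = 0) (hξtop : ξ (n + 1) = 0)
    (hC : ∀ a b, C a b = if a = b then 2 else if a + 1 = b ∨ b + 1 = a then -1 else 0)
    {a : ℕ} (ha : a ∈ Icc 1 n) :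
    ∑ b ∈ Icc 1 n, C a b * ξ b = 2 * ξ a - ξ (a - 1) - ξ (a + 1) := by
  simp only [mem_Icc] at ha
  have hrow : ∀ b ∈ Icc 1 n, C a b * ξ b = (if a = b then 2 * ξ b else 0)
      - (if a - 1 = b then ξ b else 0) - (if a + 1 = b then ξ b else 0) := by
    intro b _
    rw [hC]
    split_ifs <;> first | omega | ring
  have hedge : ∀ b ≤ n + 1, (if b ∈ Icc 1 n then ξ b else 0) = ξ b := by
    intro b hb
    split_ifs with h
    · rfl
    · obtain rfl | rfl : b = 0 ∨ b = n + 1 := by simp only [mem_Icc] at h; omega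
      exacts [hξ0.symm, hξtop.symm]
  rw [sum_congr rfl hrow, sum_sub_distrib, sum_sub_distrib, sum_ite_eq, sum_ite_eq, sum_ite_eq,
    if_pos (mem_Icc.2 ha), hedge (a - 1) (by omega), hedge (a + 1) (by omega)]

variable {τ : ℝ} {σ : ℕ → ℝ}

lemma sum_Icc_sigma_eq (hξ0 : ξ 0 = 0) (hξtop : ξ (n + 1) = 0)
    (hσdef : ∀ i, σ i = τ / (n + 1) - ξ (i - 1) + ξ i) :
    ∑ i ∈ Icc 1 (n + 1), σ i = τ := by
  have h : ∀ i ∈ Icc 1 (n + 1), σ i = τ / (n + 1) + (ξ i - ξ (i - 1)) :=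
    fun i _ => by rw [hσdef]; ring
  rw [sum_congr rfl h, sum_add_distrib, sum_Icc_sub_pred, hξ0, hξtop, sum_const, Nat.card_Icc,
    nsmul_eq_mul]
  push_cast
  field_simp
  ring

lemma cartan_pairing_eq_sum_mul_sub (hξ0 : ξ 0 = 0) (hξtop : ξ (n + 1) = 0)
    (hσdef : ∀ i, σ i = τ / (n + 1) - ξ (i - 1) + ξ i)
    (hC : ∀ a b, C a b = if a = b then 2 else if a + 1 = b ∨ b + 1 = a then -1 else 0)
    {x X : ℕ → ℝ} (hX0 : X 0 = 0) (hXtop : X (n + 1) = 0)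
    (hxX : ∀ i ∈ Icc 1 n, x i = X i) :
    ∑ a ∈ Icc 1 n, ∑ b ∈ Icc 1 n, x a * C a b * ξ b =
      ∑ i ∈ Icc 1 (n + 1), σ i * (X i - X (i - 1)) := by
  rw [sum_Icc_mul_sub_pred σ X hX0, hXtop, mul_zero, add_zero]
  refine sum_congr rfl fun a ha => ?_
  simp only [mul_assoc]
  rw [← mul_sum, sum_cartan_mul_eq hξ0 hξtop hC ha, hxX a ha, hσdef a, hσdef (a + 1),
    Nat.add_sub_cancel]
  ring

end Cartan

theorem stmt_9_general (n : ℕ) (hn : 1 ≤ n) (τ : ℝ) (ξ : ℕ → ℝ)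
    (hξ0 : ξ 0 = 0) (hξtop : ξ (n+1) = 0)
    (σ : ℕ → ℝ) (hσdef : ∀ i, σ i = τ / (n+1) - ξ (i-1) + ξ i)
    (hσpos : ∀ i ∈ Finset.Icc 1 (n+1), 0 < σ i)
    (C : ℕ → ℕ → ℝ)
    (hC : ∀ a b, C a b = if a = b then 2 else if a + 1 = b ∨ b + 1 = a then -1 else 0) :
    IsLeast
      (Set.range fun x : ℕ → ℝ =>
        τ * Real.log (Real.exp (x 1)
            + (∑ i ∈ Finset.Icc 2 n, Real.exp (-x (i-1) + x i)) + Real.exp (-x n))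
          - ∑ a ∈ Finset.Icc 1 n, ∑ b ∈ Finset.Icc 1 n, x a * C a b * ξ b)
      (τ * Real.log τ - ∑ i ∈ Finset.Icc 1 (n+1), σ i * Real.log (σ i)) := by
  have hsum := sum_Icc_sigma_eq hξ0 hξtop hσdef
  refine ⟨?_, ?_⟩
  · have hL : ∑ i ∈ Icc 1 (n + 1),
        (log (σ i) - (∑ j ∈ Icc 1 (n + 1), log (σ j)) / (n + 1)) = 0 := by
      rw [sum_sub_distrib, sum_const, Nat.card_Icc, Nat.add_sub_cancel, nsmul_eq_mul,
        Nat.cast_add_one, mul_div_cancel₀ _ (by positivity), sub_self]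
    obtain ⟨X, hX0, hXtop, hdiff⟩ := exists_sub_pred_eq_of_sum_eq_zero _ _ hL
    refine ⟨X, ?_⟩
    dsimp only
    rw [exp_add_sum_exp_add_exp_eq_sum_exp_sub hn hX0 hXtop fun _ _ => rfl,
      cartan_pairing_eq_sum_mul_sub hξ0 hξtop hσdef hC hX0 hXtop fun _ _ => rfl]
    exact mul_log_sub_sum_mul_log_eq hσpos hsum _ hdiff
  · rintro _ ⟨x, rfl⟩
    set X : ℕ → ℝ := fun i => if i ∈ Icc 1 n then x i else 0
    have hX0 : X 0 = 0 := by simp [X]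
    have hXtop : X (n + 1) = 0 := by simp [X]
    have hxX : ∀ i ∈ Icc 1 n, x i = X i := fun i hi => (if_pos hi).symm
    dsimp only
    rw [exp_add_sum_exp_add_exp_eq_sum_exp_sub hn hX0 hXtop hxX,
      cartan_pairing_eq_sum_mul_sub hξ0 hξtop hσdef hC hX0 hXtop hxX]
    exact mul_log_sub_sum_mul_log_le hσpos hsum _

/-- The Legendre transform `S(τ,ξ) = min_x (τ ln χ_{ω_1}(e^x) − ⟨x,ξ⟩)`
for the vector representation of `sl_{n+1}` (character
`χ_{ω_1}(e^x) = e^{x_1} + ∑_{i=2}^n e^{−x_{i-1}+x_i} + e^{−x_n}` in simple-root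
coordinates, pairing via the Cartan matrix `C`) equals the entropy
`τ ln τ − ∑_{i=1}^{n+1} σ_i ln σ_i`, where `σ_i = τ/(n+1) − ξ_{i-1} + ξ_i`. -/
theorem stmt_9 (n : ℕ) (hn : 1 ≤ n) (τ : ℝ) (hτ : 0 < τ) (ξ : ℕ → ℝ)
    (hξ0 : ξ 0 = 0) (hξtop : ξ (n+1) = 0)
    (σ : ℕ → ℝ) (hσdef : ∀ i, σ i = τ / (n+1) - ξ (i-1) + ξ i)
    (hσpos : ∀ i ∈ Finset.Icc 1 (n+1), 0 < σ i)
    (C : ℕ → ℕ → ℝ)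
    (hC : ∀ a b, C a b = if a = b then 2 else if a + 1 = b ∨ b + 1 = a then -1 else 0) :
    IsLeast
      (Set.range fun x : ℕ → ℝ =>
        τ * Real.log (Real.exp (x 1)
            + (∑ i ∈ Finset.Icc 2 n, Real.exp (-x (i-1) + x i)) + Real.exp (-x n))
          - ∑ a ∈ Finset.Icc 1 n, ∑ b ∈ Finset.Icc 1 n, x a * C a b * ξ b)
      (τ * Real.log τ - ∑ i ∈ Finset.Icc 1 (n+1), σ i * Real.log (σ i)) :=
  stmt_9_general n hn τ ξ hξ0 hξtop σ hσdef hσpos C hC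
end

section
/- For S(τ,σ) = τ ln τ − ∑_{i=1}^{n+1} σ_i ln σ_i viewed as a function of ξ ∈ ℝ^n via σ_i = τ/(n+1) − ξ_{i-1} + ξ_i (ξ_0 = ξ_{n+1} = 0), the negative Hessian matrix K_{ij} = −∂²S/∂ξ_i∂ξ_j is tridiagonal with K_{ii} = 1/σ_i + 1/σ_{i+1}, K_{i,i-1} = −1/σ_i, K_{i,i+1} = −1/σ_{i+1}, and zero otherwise, and det K = τ / (σ_1 σ_2 ⋯ σ_{n+1}). -/
lemma sum_Icc_one' {M : Type*} [AddCommMonoid M] (f : ℕ → M) (m : ℕ) :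
    ∑ k ∈ Finset.Icc 1 m, f k = ∑ i ∈ Finset.range m, f (i+1) := by
  induction m with
  | zero => simp
  | succ m ih => rw [Finset.sum_Icc_succ_top (by omega), ih, Finset.sum_range_succ]

lemma aux1' (A B : ℝ) (hA : A ≠ 0) (hB : B ≠ 0) :
    1 / A + 1 / B = (A + B) / (B * A) := by
  field_simp; ring

lemma aux2' (A B T : ℝ) (hA : A ≠ 0) (hB : B ≠ 0) (hTA : T + A ≠ 0) :
    1 / A + 1 / B = (T + A + B) / (B * (T + A)) + -(T / (T + A)) * -(1 / A) := by
  field_simp; ring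

lemma aux3' (A T : ℝ) (hA : A ≠ 0) (hT : T ≠ 0) (hTA : T + A ≠ 0) :
    -(1 / A) = 0 + -(T / (T + A)) * ((T + A) / (A * T)) := by
  field_simp; ring

/-- For `S(τ,σ) = τ ln τ − ∑_{i=1}^{n+1} σ_i ln σ_i` viewed as a function
of `ξ ∈ ℝ^n` via `σ_i = τ/(n+1) − ξ_{i-1} + ξ_i` (`ξ_0 = ξ_{n+1} = 0`), the negative
Hessian `K_{ij} = −∂²S/∂ξ_i∂ξ_j` is tridiagonal with `K_{ii} = 1/σ_i + 1/σ_{i+1}`,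
`K_{i,i-1} = −1/σ_i`, `K_{i,i+1} = −1/σ_{i+1}`, zero otherwise, and
`det K = τ/(σ_1⋯σ_{n+1})`. -/
theorem stmt_10 (n : ℕ) (hn : 1 ≤ n) (τ : ℝ) (hτ : 0 < τ)
    (ξe : (Fin n → ℝ) → ℕ → ℝ)
    (hξe : ∀ v i, ξe v i = if h : 1 ≤ i ∧ i ≤ n then v ⟨i - 1, by omega⟩ else 0)
    (σf : (Fin n → ℝ) → ℕ → ℝ)
    (hσf : ∀ v i, σf v i = τ / (n+1) - ξe v (i-1) + ξe v i)
    (S : (Fin n → ℝ) → ℝ)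
    (hS : ∀ v, S v = τ * Real.log τ - ∑ i ∈ Finset.Icc 1 (n+1), σf v i * Real.log (σf v i))
    (ξ0 : Fin n → ℝ) (hpos : ∀ i ∈ Finset.Icc 1 (n+1), 0 < σf ξ0 i)
    (K : Matrix (Fin n) (Fin n) ℝ)
    (hK : ∀ i j, K i j
      = -(fderiv ℝ (fun v => fderiv ℝ S v (Pi.single j 1)) ξ0 (Pi.single i 1))) :
    (∀ i j : Fin n,
      K i j = if (i : ℕ) = (j : ℕ) then 1 / σf ξ0 ((i : ℕ) + 1) + 1 / σf ξ0 ((i : ℕ) + 2)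
        else if (j : ℕ) + 1 = (i : ℕ) then -(1 / σf ξ0 ((i : ℕ) + 1))
        else if (i : ℕ) + 1 = (j : ℕ) then -(1 / σf ξ0 ((i : ℕ) + 2))
        else 0) ∧
    K.det = τ / ∏ i ∈ Finset.Icc 1 (n+1), σf ξ0 i := by
  classical
  set c : ℝ := τ / (n+1) with hc
  -- linear functionals
  set ℓ : ℕ → ((Fin n → ℝ) →L[ℝ] ℝ) := fun i =>
    if h : 1 ≤ i ∧ i ≤ n then ContinuousLinearMap.proj (⟨i - 1, by omega⟩ : Fin n) else 0
    with hℓdef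
  have hℓ : ∀ v i, ξe v i = ℓ i v := by
    intro v i
    rw [hξe, hℓdef]
    by_cases h : 1 ≤ i ∧ i ≤ n
    · simp [h]
    · simp [h]
  set d : ℕ → ((Fin n → ℝ) →L[ℝ] ℝ) := fun k => ℓ k - ℓ (k-1) with hd
  have hσd : ∀ v k, σf v k = c + d k v := by
    intro v k
    rw [hσf, hℓ, hℓ, hd]
    simp only [ContinuousLinearMap.sub_apply]
    ring
  have hσ_diff : ∀ k v, HasFDerivAt (fun v => σf v k) (d k) v := by
    intro k v
    have : (fun v => σf v k) = fun v => c + d k v := funext fun v => hσd v k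
    rw [this]
    exact ((hasFDerivAt_const c v).add ((d k).hasFDerivAt)).congr_fderiv (zero_add _)
  -- first derivative of S
  set F : (Fin n → ℝ) → ((Fin n → ℝ) →L[ℝ] ℝ) := fun v =>
    -∑ k ∈ Finset.Icc 1 (n+1), (Real.log (σf v k) + 1) • d k with hFdef
  have hF : ∀ v, (∀ k ∈ Finset.Icc 1 (n+1), σf v k ≠ 0) → HasFDerivAt S (F v) v := by
    intro v hv
    have hsum : HasFDerivAt
        (fun v => ∑ k ∈ Finset.Icc 1 (n+1), σf v k * Real.log (σf v k))
        (∑ k ∈ Finset.Icc 1 (n+1), (Real.log (σf v k) + 1) • d k) v := by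
      refine HasFDerivAt.fun_sum fun k hk => ?_
      exact (Real.hasDerivAt_mul_log (hv k hk)).comp_hasFDerivAt v (hσ_diff k v)
    have := hsum.const_sub (τ * Real.log τ)
    have hSe : S = fun v => τ * Real.log τ
        - ∑ k ∈ Finset.Icc 1 (n+1), σf v k * Real.log (σf v k) := funext hS
    rw [hSe, hFdef]
    exact this
  -- neighborhood where σf positive
  have hUopen : IsOpen {v : Fin n → ℝ | ∀ k ∈ Finset.Icc 1 (n+1), 0 < σf v k} := by
    have : {v : Fin n → ℝ | ∀ k ∈ Finset.Icc 1 (n+1), 0 < σf v k}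
        = ⋂ k ∈ Finset.Icc 1 (n+1), {v | 0 < σf v k} := by
      ext v; simp
    rw [this]
    refine isOpen_biInter_finset fun k hk => ?_
    have hcont : Continuous fun v => σf v k := by
      have : (fun v => σf v k) = fun v => c + d k v := funext fun v => hσd v k
      rw [this]
      exact continuous_const.add (d k).continuous
    exact isOpen_lt continuous_const hcont
  have hUmem : {v : Fin n → ℝ | ∀ k ∈ Finset.Icc 1 (n+1), 0 < σf v k} ∈ nhds ξ0 :=
    hUopen.mem_nhds hpos
  have hev : (fun v => fderiv ℝ S v) =ᶠ[nhds ξ0] F :=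
    Filter.eventually_of_mem hUmem fun v hv =>
      (hF v fun k hk => (hv k hk).ne').fderiv
  -- coefficients
  set a : ℕ → Fin n → ℝ := fun k j => d k (Pi.single j 1) with hadef
  have hℓs : ∀ (m : ℕ) (j : Fin n), ℓ m (Pi.single j 1) = if m = (j:ℕ)+1 then 1 else 0 := by
    intro m j
    rw [hℓdef]
    by_cases h : 1 ≤ m ∧ m ≤ n
    · simp only [dif_pos h, ContinuousLinearMap.proj_apply]
      by_cases hm : m = (j:ℕ)+1
      · have : (⟨m-1, by omega⟩ : Fin n) = j := by ext; simp; omega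
        rw [this, if_pos hm, Pi.single_eq_same]
      · rw [if_neg hm, Pi.single_eq_of_ne]
        intro hcon
        apply hm
        have := congrArg Fin.val hcon
        simp at this
        omega
    · have : m ≠ (j:ℕ)+1 := by
        intro hcon; apply h; constructor <;> omega
      simp [h, this]
  have ha : ∀ (k : ℕ) (j : Fin n), 1 ≤ k →
      a k j = (if k = (j:ℕ)+1 then 1 else 0) - (if k = (j:ℕ)+2 then 1 else 0) := by
    intro k j hk
    rw [hadef]
    simp only [hd, ContinuousLinearMap.sub_apply, hℓs]
    congr 1
    have : k - 1 = (j:ℕ)+1 ↔ k = (j:ℕ)+2 := by omega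
    simp only [this]
  -- second derivative
  have hKform : ∀ (i j : Fin n),
      K i j = ∑ k ∈ Finset.Icc 1 (n+1), a k j * ((σf ξ0 k)⁻¹ * a k i) := by
    intro i j
    have hev' : (fun v => fderiv ℝ S v (Pi.single j 1))
        =ᶠ[nhds ξ0] (fun v => F v (Pi.single j 1)) :=
      hev.mono fun v hv => by
        show (fderiv ℝ S v) (Pi.single j 1) = (F v) (Pi.single j 1)
        rw [show fderiv ℝ S v = F v from hv]
    have hG : HasFDerivAt (fun v => F v (Pi.single j 1))
        (-∑ k ∈ Finset.Icc 1 (n+1), a k j • ((σf ξ0 k)⁻¹ • d k)) ξ0 := by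
      have hFe : (fun v => F v (Pi.single j 1))
          = fun v => -∑ k ∈ Finset.Icc 1 (n+1), (Real.log (σf v k) + 1) * a k j := by
        funext v
        rw [hFdef]
        simp only [ContinuousLinearMap.neg_apply, ContinuousLinearMap.sum_apply,
          ContinuousLinearMap.smul_apply, smul_eq_mul, hadef]
      rw [hFe]
      refine HasFDerivAt.neg (HasFDerivAt.fun_sum fun k hk => ?_)
      have h1 : HasFDerivAt (fun v => Real.log (σf v k)) ((σf ξ0 k)⁻¹ • d k) ξ0 :=
        by have := (Real.hasDerivAt_log (hpos k hk).ne').comp_hasFDerivAt ξ0 (hσ_diff k ξ0); exact this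
      exact (h1.add_const 1).mul_const (a k j)
    rw [hK, hev'.fderiv_eq, hG.fderiv]
    simp only [ContinuousLinearMap.neg_apply, ContinuousLinearMap.sum_apply,
      ContinuousLinearMap.smul_apply, smul_eq_mul, neg_neg]
    rfl
  have hpart1 : ∀ i j : Fin n,
      K i j = if (i : ℕ) = (j : ℕ) then 1 / σf ξ0 ((i : ℕ) + 1) + 1 / σf ξ0 ((i : ℕ) + 2)
        else if (j : ℕ) + 1 = (i : ℕ) then -(1 / σf ξ0 ((i : ℕ) + 1))
        else if (i : ℕ) + 1 = (j : ℕ) then -(1 / σf ξ0 ((i : ℕ) + 2))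
        else 0 := by
    intro i j
    rw [hKform]
    have hilt : (i : ℕ) < n := i.isLt
    have hsub : ({(i:ℕ)+1, (i:ℕ)+2} : Finset ℕ) ⊆ Finset.Icc 1 (n+1) := by
      intro x hx
      simp only [Finset.mem_insert, Finset.mem_singleton] at hx
      rw [Finset.mem_Icc]
      rcases hx with h | h <;> omega
    have hzero : ∀ k ∈ Finset.Icc 1 (n+1), k ∉ ({(i:ℕ)+1, (i:ℕ)+2} : Finset ℕ) →
        a k j * ((σf ξ0 k)⁻¹ * a k i) = 0 := by
      intro k hk hk2
      simp only [Finset.mem_insert, Finset.mem_singleton] at hk2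
      push_neg at hk2
      have hk1 : 1 ≤ k := (Finset.mem_Icc.mp hk).1
      rw [ha k i hk1, if_neg hk2.1, if_neg hk2.2]
      ring
    rw [← Finset.sum_subset hsub hzero,
      Finset.sum_pair (by omega : (i:ℕ)+1 ≠ (i:ℕ)+2)]
    have e1 : a ((i:ℕ)+1) i = 1 := by
      rw [ha _ _ (by omega), if_pos rfl, if_neg (by omega)]; ring
    have e2 : a ((i:ℕ)+2) i = -1 := by
      rw [ha _ _ (by omega), if_neg (by omega), if_pos rfl]; ring
    rw [e1, e2, ha ((i:ℕ)+1) j (by omega), ha ((i:ℕ)+2) j (by omega)]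
    split_ifs <;> first | (exfalso; omega) | ring1
  refine ⟨hpart1, ?_⟩
  -- determinant part
  have hσpos : ∀ k, 1 ≤ k → k ≤ n+1 → 0 < σf ξ0 k := fun k h1 h2 =>
    hpos k (Finset.mem_Icc.mpr ⟨h1, h2⟩)
  set t : ℕ → ℝ := fun m => ∑ k ∈ Finset.Icc 1 m, σf ξ0 k with ht
  have htpos : ∀ m, 1 ≤ m → m ≤ n+1 → 0 < t m := by
    intro m h1 h2
    refine Finset.sum_pos (fun k hk => ?_) ⟨1, ?_⟩
    · rw [Finset.mem_Icc] at hk; exact hσpos k hk.1 (by omega)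
    · rw [Finset.mem_Icc]; omega
  have htsucc : ∀ m : ℕ, t (m+1) = t m + σf ξ0 (m+1) := fun m =>
    Finset.sum_Icc_succ_top (by omega) _
  have ht1 : t 1 = σf ξ0 1 := by
    show ∑ k ∈ Finset.Icc 1 1, σf ξ0 k = σf ξ0 1
    rw [Finset.Icc_self, Finset.sum_singleton]
  have hz0 : ξe ξ0 0 = 0 := by rw [hξe, dif_neg]; omega
  have hzn : ξe ξ0 (n+1) = 0 := by rw [hξe, dif_neg]; omega
  have htτ : t (n+1) = τ := by
    have hstep : ∀ x : ℕ, σf ξ0 (x+1) = c + (ξe ξ0 (x+1) - ξe ξ0 x) := by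
      intro x; rw [hσf]; simp only [Nat.add_sub_cancel]; ring
    calc t (n+1) = ∑ x ∈ Finset.range (n+1), σf ξ0 (x+1) := sum_Icc_one' _ _
      _ = ∑ x ∈ Finset.range (n+1), (c + (ξe ξ0 (x+1) - ξe ξ0 x)) :=
          Finset.sum_congr rfl fun x _ => hstep x
      _ = (n+1) • c + (ξe ξ0 (n+1) - ξe ξ0 0) := by
          rw [Finset.sum_add_distrib, Finset.sum_const, Finset.card_range,
            Finset.sum_range_sub (fun x => ξe ξ0 x)]
      _ = τ := by
          rw [hz0, hzn, hc]
          have : ((n:ℝ)+1) ≠ 0 := by positivity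
          rw [nsmul_eq_mul, sub_self, add_zero]; push_cast
          field_simp
  set L : Matrix (Fin n) (Fin n) ℝ := Matrix.of fun i j =>
    if (i:ℕ) = (j:ℕ) then 1
    else if (j:ℕ)+1 = (i:ℕ) then -(t ((j:ℕ)+1) / t ((j:ℕ)+2)) else 0 with hLdef
  set U : Matrix (Fin n) (Fin n) ℝ := Matrix.of fun i j =>
    if (i:ℕ) = (j:ℕ) then t ((i:ℕ)+2) / (σf ξ0 ((i:ℕ)+2) * t ((i:ℕ)+1))
    else if (i:ℕ)+1 = (j:ℕ) then -(1 / σf ξ0 ((i:ℕ)+2)) else 0 with hUdef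
  have hLU : K = L * U := by
    ext i j
    rw [Matrix.mul_apply, hpart1 i j]
    have hilt : (i : ℕ) < n := i.isLt
    have hjlt : (j : ℕ) < n := j.isLt
    have hs1 : σf ξ0 ((i:ℕ)+1) ≠ 0 := (hσpos _ (by omega) (by omega)).ne'
    have hs2 : σf ξ0 ((i:ℕ)+2) ≠ 0 := (hσpos _ (by omega) (by omega)).ne'
    have ht1' : t ((i:ℕ)+1) ≠ 0 := (htpos _ (by omega) (by omega)).ne'
    have hr1 : t ((i:ℕ)+1) = t (i:ℕ) + σf ξ0 ((i:ℕ)+1) := htsucc _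
    have hr2 : t ((i:ℕ)+2) = t ((i:ℕ)+1) + σf ξ0 ((i:ℕ)+2) := htsucc _
    rcases Nat.eq_zero_or_pos (i:ℕ) with hi | hi
    · have hLe : ∀ k : Fin n, L i k * U k j = if i = k then U k j else 0 := by
        intro k
        rw [hLdef]
        simp only [Matrix.of_apply]
        by_cases h : i = k
        · rw [if_pos h, if_pos (by rw [h]), one_mul]
        · rw [if_neg h, if_neg (fun hc => h (Fin.ext hc)),
            if_neg (by omega), zero_mul]
      rw [Finset.sum_congr rfl fun k _ => hLe k, Finset.sum_ite_eq, if_pos (Finset.mem_univ i)]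
      rw [hUdef]
      simp only [Matrix.of_apply]
      have hti0 : t (i:ℕ) = 0 := by
        rw [show (i:ℕ) = 0 from hi]
        show ∑ k ∈ Finset.Icc 1 0, σf ξ0 k = 0
        simp
      rw [hr2, hr1]
      simp only [hti0, zero_add]
      set A := σf ξ0 ((i:ℕ)+1) with hA
      set B := σf ξ0 ((i:ℕ)+2) with hB
      clear_value A B
      split_ifs <;> first | (exfalso; omega) | ring1 | exact aux1' A B hs1 hs2
    · set i' : Fin n := ⟨(i:ℕ)-1, by omega⟩ with hi'def
      have hi'v : (i' : ℕ) = (i:ℕ) - 1 := rfl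
      have hti0 : t (i:ℕ) ≠ 0 := (htpos _ (by omega) (by omega)).ne'
      have hLe : ∀ k : Fin n, L i k * U k j =
          (if i = k then U k j else 0)
          + (if i' = k then -(t (i:ℕ) / t ((i:ℕ)+1)) * U k j else 0) := by
        intro k
        rw [hLdef]
        simp only [Matrix.of_apply]
        by_cases h : i = k
        · rw [if_pos (by rw [h]), if_pos h, if_neg (by
            intro hc; rw [← hc] at h; apply absurd (congrArg Fin.val h); simp [hi'v]; omega),
            one_mul, add_zero]
        · rw [if_neg (fun hc => h (Fin.ext hc)), if_neg h, zero_add]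
          by_cases h2 : i' = k
          · rw [if_pos h2]
            have hkv : (k:ℕ) = (i:ℕ) - 1 := by rw [← h2]
            rw [if_pos (by omega)]
            rw [show (k:ℕ)+1 = (i:ℕ) from by omega, show (k:ℕ)+2 = (i:ℕ)+1 from by omega]
          · rw [if_neg (fun hc => h2 (Fin.ext (by simp [hi'v]; omega))), if_neg h2, zero_mul]
      rw [Finset.sum_congr rfl fun k _ => hLe k, Finset.sum_add_distrib,
        Finset.sum_ite_eq, Finset.sum_ite_eq, if_pos (Finset.mem_univ i),
        if_pos (Finset.mem_univ i')]
      rw [hUdef]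
      simp only [Matrix.of_apply, hi'v,
        show (i:ℕ)-1+1 = (i:ℕ) from by omega,
        show (i:ℕ)-1+2 = (i:ℕ)+1 from by omega]
      rw [hr2, hr1]
      have hts : t (i:ℕ) + σf ξ0 ((i:ℕ)+1) ≠ 0 := by rw [← hr1]; exact ht1'
      set A := σf ξ0 ((i:ℕ)+1) with hA
      set B := σf ξ0 ((i:ℕ)+2) with hB
      set T := t (i:ℕ) with hT
      clear_value A B T
      split_ifs <;> first | (exfalso; omega) | ring1 | exact aux2' A B T hs1 hs2 hts |
        exact aux3' A T hs1 hti0 hts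
  have hdetL : L.det = 1 := by
    rw [Matrix.det_of_lowerTriangular L (by
      intro p q hpq
      rw [hLdef]
      simp only [Matrix.of_apply]
      have : (p:ℕ) < (q:ℕ) := hpq
      rw [if_neg (by omega), if_neg (by omega)])]
    rw [hLdef]
    simp
  have hdetU : U.det = ∏ p : Fin n, (t ((p:ℕ)+2) / (σf ξ0 ((p:ℕ)+2) * t ((p:ℕ)+1))) := by
    rw [Matrix.det_of_upperTriangular (by
      intro p q hpq
      rw [hUdef]
      simp only [Matrix.of_apply]
      have : (q:ℕ) < (p:ℕ) := hpq
      rw [if_neg (by omega), if_neg (by omega)])]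
    refine Finset.prod_congr rfl fun p _ => ?_
    rw [hUdef]
    simp
  have hprod : ∀ m, m ≤ n → ∏ x ∈ Finset.range m, (t (x+2) / (σf ξ0 (x+2) * t (x+1)))
      = t (m+1) / ∏ k ∈ Finset.Icc 1 (m+1), σf ξ0 k := by
    intro m
    induction m with
    | zero =>
      intro _
      rw [Finset.prod_range_zero, Finset.Icc_self, Finset.prod_singleton, ht1]
      rw [div_self (hσpos 1 le_rfl (by omega)).ne']
    | succ m ih =>
      intro hm
      have hP : (∏ k ∈ Finset.Icc 1 (m+1), σf ξ0 k) ≠ 0 :=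
        Finset.prod_ne_zero_iff.mpr fun k hk => by
          rw [Finset.mem_Icc] at hk; exact (hσpos k hk.1 (by omega)).ne'
      have htm : t (m+1) ≠ 0 := (htpos _ (by omega) (by omega)).ne'
      have hsm : σf ξ0 (m+2) ≠ 0 := (hσpos _ (by omega) (by omega)).ne'
      rw [Finset.prod_range_succ, ih (by omega),
        Finset.prod_Icc_succ_top (by omega : 1 ≤ m+2)]
      field_simp
  rw [hLU, Matrix.det_mul, hdetL, hdetU, one_mul,
    Fin.prod_univ_eq_prod_range (fun x => t (x+2) / (σf ξ0 (x+2) * t (x+1))) n,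
    hprod n le_rfl, htτ]
end
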